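/- Fix φ₀ ∈ [0, π/2] and an integer s ≥ 2. With Δ = 2π/M, S(s, φ₀) = Σ_{j=0}^{s-1} σ(φ₀, (j − (s−1)/2)Δ)², and σ(φ₀, t) = arccos(sin²φ₀ + cos²φ₀ cos t), one has (1/s) S(s, φ₀) = cos²φ₀ · (Δ²/12)(s² − 1) + O(Δ⁴) as M → ∞ with s fixed; i.e., there exist constants C, M₀ such that for all M ≥ M₀, |(1/s)S(s,φ₀) − cos²φ₀ (Δ²/12)(s²−1)| ≤ C Δ⁴. -/

import Mathlib

/-!
On the latitude circle the geodesic distance is `σ = arccos (1 - u)` with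
`u = cos² φ₀ (1 - cos t) ≤ t² / 2`. From `1 - θ²/2 ≤ cos θ ≤ 1 - θ²/2 + O(θ⁴)` one gets
`2u ≤ σ² ≤ 2u + u²`, and `2u = cos² φ₀ · t² + O(t⁴)`, so `σ² = cos² φ₀ · t² + O(t⁴)` uniformly
in `φ₀`. Averaging over the block, the model terms sum exactly, since the squared offsets
`(j - (s-1)/2)²` of `s` centred points sum to `s (s² - 1) / 12`.
-/

open Real Finset

theorem sum_range_sub_sq (n : ℕ) (x : ℝ) :
    ∑ j ∈ range n, ((j : ℝ) - x) ^ 2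
      = n * (n - 1) * (2 * n - 1) / 6 - x * n * (n - 1) + n * x ^ 2 := by
  induction n with
  | zero => simp
  | succ n ih =>
    rw [sum_range_succ, ih]
    push_cast
    ring

theorem sum_range_sub_half_sq (s : ℕ) :
    ∑ j ∈ range s, ((j : ℝ) - ((s : ℝ) - 1) / 2) ^ 2 = s * ((s : ℝ) ^ 2 - 1) / 12 := by
  rw [sum_range_sub_sq]
  ring

theorem abs_natCast_sub_pred_half_le {s j : ℕ} (hj : j < s) :
    |(j : ℝ) - ((s : ℝ) - 1) / 2| ≤ s / 2 := by
  have : (j : ℝ) + 1 ≤ s := by exact_mod_cast hj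
  rw [abs_le]
  constructor <;> linarith [(Nat.cast_nonneg j : (0 : ℝ) ≤ j)]

theorem two_mul_le_sq_arccos_one_sub {u : ℝ} (hu₀ : 0 ≤ u) (hu₂ : u ≤ 2) :
    2 * u ≤ arccos (1 - u) ^ 2 := by
  have h := one_sub_sq_div_two_le_cos (x := arccos (1 - u))
  rw [cos_arccos (by linarith) (by linarith)] at h
  linarith

theorem sq_arccos_one_sub_le {u : ℝ} (hu₀ : 0 ≤ u) (hu : u ≤ 1 / 3) :
    arccos (1 - u) ^ 2 ≤ 2 * u + u ^ 2 := by
  set θ := √(2 * u + u ^ 2)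
  have hθ_sq : θ ^ 2 = 2 * u + u ^ 2 := sq_sqrt (by positivity)
  have hθ₀ : 0 ≤ θ := sqrt_nonneg _
  have hθ₁ : θ ≤ 1 := by nlinarith
  have hcos : cos θ ≤ 1 - u := by
    have h := (abs_le.mp (cos_bound (x := θ) (by rwa [abs_of_nonneg hθ₀]))).2
    rw [abs_of_nonneg hθ₀, show θ ^ 4 = (θ ^ 2) ^ 2 by ring, hθ_sq] at h
    have : (2 * u + u ^ 2) ^ 2 ≤ 49 / 9 * u ^ 2 := by
      rw [show (2 * u + u ^ 2) ^ 2 = u ^ 2 * (2 + u) ^ 2 by ring]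
      have : (2 + u) ^ 2 ≤ (7 / 3) ^ 2 := pow_le_pow_left₀ (by linarith) (by linarith) 2
      nlinarith [mul_le_mul_of_nonneg_left this (sq_nonneg u)]
    nlinarith
  have hle : arccos (1 - u) ≤ θ := by
    simpa [arccos_cos hθ₀ (hθ₁.trans (by linarith [pi_gt_three]))] using arccos_le_arccos hcos
  nlinarith [arccos_nonneg (1 - u)]

theorem abs_sq_arccos_one_sub_mul_sub_le {a t : ℝ} (ha₀ : 0 ≤ a) (ha₁ : a ≤ 1)
    (ht : |t| ≤ 1 / 2) :
    |arccos (1 - a * (1 - cos t)) ^ 2 - a * t ^ 2| ≤ t ^ 4 := by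
  have ht_sq : t ^ 2 ≤ 1 / 4 := by nlinarith [sq_abs t, abs_nonneg t]
  have hcos_upper := (abs_le.mp (cos_bound (x := t) (ht.trans (by norm_num)))).2
  rw [Even.pow_abs (by decide)] at hcos_upper
  have hu₀ : 0 ≤ a * (1 - cos t) := mul_nonneg ha₀ (by linarith [cos_le_one t])
  have h2u : 2 * (a * (1 - cos t)) ≤ a * t ^ 2 := by
    nlinarith [mul_le_mul_of_nonneg_left (one_sub_sq_div_two_le_cos (x := t)) ha₀]
  have hu : a * (1 - cos t) ≤ t ^ 2 / 2 := by nlinarith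
  have hlower := two_mul_le_sq_arccos_one_sub hu₀ (by linarith)
  have hupper := sq_arccos_one_sub_le hu₀ (by linarith)
  rw [abs_le]
  constructor
  · nlinarith [mul_le_mul_of_nonneg_left hcos_upper ha₀,
      mul_le_of_le_one_left (by positivity : (0 : ℝ) ≤ t ^ 4) ha₁]
  · nlinarith [pow_le_pow_left₀ hu₀ hu 2]

theorem abs_sq_arccos_sin_sq_add_cos_sq_mul_cos_sub_le (φ : ℝ) {t : ℝ} (ht : |t| ≤ 1 / 2) :
    |arccos (sin φ ^ 2 + cos φ ^ 2 * cos t) ^ 2 - cos φ ^ 2 * t ^ 2| ≤ t ^ 4 := by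
  rw [show sin φ ^ 2 + cos φ ^ 2 * cos t = 1 - cos φ ^ 2 * (1 - cos t) by
    linear_combination sin_sq_add_cos_sq φ]
  exact abs_sq_arccos_one_sub_mul_sub_le (sq_nonneg _) (cos_sq_le_one φ) ht

theorem abs_mean_sub_mean_le {s : ℕ} (hs : 0 < s) {f g : ℕ → ℝ} {ε : ℝ}
    (h : ∀ j ∈ range s, |f j - g j| ≤ ε) :
    |(1 / (s : ℝ)) * ∑ j ∈ range s, f j - (1 / (s : ℝ)) * ∑ j ∈ range s, g j| ≤ ε := by
  have hs' : (0 : ℝ) < s := by exact_mod_cast hs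
  rw [← mul_sub, ← sum_sub_distrib, abs_mul, abs_of_pos (by positivity), one_div_mul_eq_div,
    div_le_iff₀ hs']
  calc |∑ j ∈ range s, (f j - g j)| ≤ ∑ j ∈ range s, |f j - g j| := abs_sum_le_sum_abs _ _
    _ ≤ ∑ _j ∈ range s, ε := sum_le_sum h
    _ = ε * s := by simp [mul_comm]

open Real in
theorem block_distortion_asymptotics_general (φ₀ : ℝ) (s : ℕ)
    (hs : 2 ≤ s) :
    ∃ C : ℝ, ∃ M₀ : ℕ, ∀ M : ℕ, M₀ ≤ M →
      |(1 / (s : ℝ)) * (∑ j ∈ Finset.range s,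
          (arccos (sin φ₀ ^ 2 + cos φ₀ ^ 2
            * cos (((j : ℝ) - ((s : ℝ) - 1) / 2) * (2 * π / M)))) ^ 2)
        - cos φ₀ ^ 2 * ((2 * π / M) ^ 2 / 12) * ((s : ℝ) ^ 2 - 1)|
      ≤ C * (2 * π / M) ^ 4 := by
  refine ⟨((s : ℝ) / 2) ^ 4, 7 * s, fun M hM => ?_⟩
  set Δ := 2 * π / M
  have hs₀ : (0 : ℝ) < s := by exact_mod_cast (by omega : 0 < s)
  have hΔ₀ : 0 ≤ Δ := by positivity
  have hsΔ : (s : ℝ) / 2 * Δ ≤ 1 / 2 := by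
    have hM : 7 * (s : ℝ) ≤ M := by exact_mod_cast hM
    rw [show (s : ℝ) / 2 * Δ = s * π / M by ring, div_le_iff₀ (by linarith)]
    nlinarith [pi_lt_d2]
  have hmodel :
      (1 / (s : ℝ)) * ∑ j ∈ range s, cos φ₀ ^ 2 * (((j : ℝ) - ((s : ℝ) - 1) / 2) * Δ) ^ 2 =
        cos φ₀ ^ 2 * (Δ ^ 2 / 12) * ((s : ℝ) ^ 2 - 1) := by
    simp_rw [mul_pow, ← mul_assoc, ← sum_mul, ← mul_sum, sum_range_sub_half_sq]
    field_simp
  rw [← hmodel, ← mul_pow]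
  refine abs_mean_sub_mean_le (by omega) fun j hj => ?_
  have ht : |((j : ℝ) - ((s : ℝ) - 1) / 2) * Δ| ≤ (s : ℝ) / 2 * Δ := by
    rw [abs_mul, abs_of_nonneg hΔ₀]
    exact mul_le_mul_of_nonneg_right (abs_natCast_sub_pred_half_le (mem_range.mp hj)) hΔ₀
  calc _ ≤ (((j : ℝ) - ((s : ℝ) - 1) / 2) * Δ) ^ 4 :=
        abs_sq_arccos_sin_sq_add_cos_sq_mul_cos_sub_le φ₀ (ht.trans hsΔ)
    _ = |((j : ℝ) - ((s : ℝ) - 1) / 2) * Δ| ^ 4 := (Even.pow_abs (by decide) _).symm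
    _ ≤ ((s : ℝ) / 2 * Δ) ^ 4 := pow_le_pow_left₀ (abs_nonneg _) ht 4

open Real in
theorem block_distortion_asymptotics (φ₀ : ℝ) (s : ℕ)
    (hφ : φ₀ ∈ Set.Icc 0 (π / 2)) (hs : 2 ≤ s) :
    ∃ C : ℝ, ∃ M₀ : ℕ, ∀ M : ℕ, M₀ ≤ M →
      |(1 / (s : ℝ)) * (∑ j ∈ Finset.range s,
          (arccos (sin φ₀ ^ 2 + cos φ₀ ^ 2
            * cos (((j : ℝ) - ((s : ℝ) - 1) / 2) * (2 * π / M)))) ^ 2)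
        - cos φ₀ ^ 2 * ((2 * π / M) ^ 2 / 12) * ((s : ℝ) ^ 2 - 1)|
      ≤ C * (2 * π / M) ^ 4 :=
  block_distortion_asymptotics_general φ₀ s hs
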